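/- arXiv:1005.4884 — 5 statements merged into one kernel-verified Lean document; each statement's English description precedes it below -/
import Mathlib

section
/- Let (M,d) be a proper metric space and r > 0. Let (Pₖ) be a sequence of r-uniformly discrete subsets of M (every open ball of radius r contains at most one point of Pₖ). Suppose P ⊆ M is such that, for every φ : M → ℝ continuous with compact support, ∑_{p ∈ Pₖ} φ(p) → ∑_{p ∈ P} φ(p) as k → ∞. Then for every m ∈ M exactly one of the following holds: (a) for every ε > 0, Pₖ ∩ B_ε(m) ≠ ∅ for all sufficiently large k; or (b) there exists ε > 0 such that Pₖ ∩ B_ε(m) = ∅ for all sufficiently large k. Moreover P equals the set of all m ∈ M satisfying (a). -/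
/-!
Test the convergence against a continuous bump `φ` with compact support in a ball `B_δ(m)` of
radius `δ ≤ r`: by uniform discreteness each of `P k` and `Q` meets that ball in at most one point,
so each sum `∑ p ∈ P k, φ p` is either `0` or the value of `φ` at that single point. If `m ∈ Q`
and `φ m = 1`, the limit is `1`, so the `P k` eventually meet the ball. If `m ∉ Q`, shrink the ball
to miss `Q`; the limit is `0`, so eventually no point of `P k` lies where `φ = 1`.
-/

open Filter Topology Set Metric

section

variable {M : Type*} [MetricSpace M]

/-- Vague convergence of the counting measures `∑ p ∈ P k, δ_p` to `∑ p ∈ Q, δ_p`. -/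
def TendstoVaguely {ι : Type*} (P : ι → Set M) (l : Filter ι) (Q : Set M) : Prop :=
  ∀ φ : M → ℝ, Continuous φ → HasCompactSupport φ →
    Tendsto (fun k => ∑ᶠ p ∈ P k, φ p) l (𝓝 (∑ᶠ p ∈ Q, φ p))

theorem finsum_mem_eq_of_subsingleton_inter {α R : Type*} [AddCommMonoid R] {S U : Set α}
    {φ : α → R}
    (hS : (S ∩ U).Subsingleton) (hφ : Function.support φ ⊆ U) {p : α} (hpS : p ∈ S)
    (hpU : p ∈ U) : ∑ᶠ x ∈ S, φ x = φ p := by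
  rw [← finsum_mem_singleton (f := φ) (a := p)]
  refine finsum_mem_inter_support_eq' _ _ _ fun x hx => ⟨fun hxS => ?_, fun hxp => hxp ▸ hpS⟩
  exact hS ⟨hxS, hφ hx⟩ ⟨hpS, hpU⟩

theorem exists_ball_inter_eq_empty {S : Set M} {m : M} {r : ℝ} (hr : 0 < r)
    (hS : (S ∩ ball m r).Finite) (hm : m ∉ S) : ∃ δ > 0, δ ≤ r ∧ S ∩ ball m δ = ∅ := by
  obtain ⟨δ, hδ, hδS⟩ := Metric.mem_nhds_iff.1
    (hS.isClosed.isOpen_compl.mem_nhds fun h => hm h.1)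
  refine ⟨min δ r, lt_min hδ hr, min_le_right _ _, eq_empty_of_forall_notMem ?_⟩
  rintro x ⟨hxS, hx⟩
  exact hδS (ball_subset_ball (min_le_left _ _) hx)
    ⟨hxS, ball_subset_ball (min_le_right _ _) hx⟩

variable [ProperSpace M]

theorem exists_continuous_one_on_closedBall_support_subset_ball (m : M) {ε δ : ℝ} (h : ε < δ) :
    ∃ φ : M → ℝ, Continuous φ ∧ HasCompactSupport φ ∧ EqOn φ 1 (closedBall m ε) ∧
      Function.support φ ⊆ ball m δ := by
  have hd : Disjoint (closedBall m ε) (ball m δ)ᶜ :=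
    disjoint_compl_right_iff_subset.2 (closedBall_subset_ball h)
  obtain ⟨φ, hone, hzero, hcpt, -⟩ :=
    exists_continuous_one_zero_of_isCompact (isCompact_closedBall m ε) isOpen_ball.isClosed_compl hd
  refine ⟨φ, φ.continuous, hcpt, hone, fun x hx => ?_⟩
  by_contra hxδ
  exact hx (hzero hxδ)

variable {ι : Type*} {l : Filter ι} {P : ι → Set M} {Q : Set M} {m : M} {r : ℝ}

theorem eventually_nonempty_inter_ball_of_mem (hr : 0 < r)
    (hQ : (Q ∩ ball m r).Subsingleton) (hPQ : TendstoVaguely P l Q) (hm : m ∈ Q)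
    {ε : ℝ} (hε : 0 < ε) : ∀ᶠ k in l, (P k ∩ ball m ε).Nonempty := by
  set δ := min ε r
  have hδ : 0 < δ := lt_min hε hr
  obtain ⟨φ, hφc, hφcpt, hφone, hφsupp⟩ :=
    exists_continuous_one_on_closedBall_support_subset_ball m (half_lt_self hδ)
  have hφm : φ m = 1 := hφone (mem_closedBall_self (half_pos hδ).le)
  have hQsum : ∑ᶠ p ∈ Q, φ p = 1 := by
    rw [← hφm]
    exact finsum_mem_eq_of_subsingleton_inter hQ
      (hφsupp.trans (ball_subset_ball (min_le_right _ _))) hm (mem_ball_self hr)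
  have hlim := hPQ φ hφc hφcpt
  rw [hQsum] at hlim
  filter_upwards [hlim.eventually_ne one_ne_zero] with k hk
  obtain ⟨p, hpP, hp⟩ := exists_ne_zero_of_finsum_mem_ne_zero hk
  exact ⟨p, hpP, ball_subset_ball (min_le_left _ _) (hφsupp hp)⟩

theorem eventually_inter_ball_eq_empty_of_notMem (hr : 0 < r)
    (hP : ∀ k, (P k ∩ ball m r).Subsingleton) (hQ : (Q ∩ ball m r).Subsingleton)
    (hPQ : TendstoVaguely P l Q) (hm : m ∉ Q) :
    ∃ ε > 0, ∀ᶠ k in l, P k ∩ ball m ε = ∅ := by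
  obtain ⟨δ, hδ, hδr, hQδ⟩ := exists_ball_inter_eq_empty hr hQ.finite hm
  obtain ⟨φ, hφc, hφcpt, hφone, hφsupp⟩ :=
    exists_continuous_one_on_closedBall_support_subset_ball m (half_lt_self hδ)
  have hQsum : ∑ᶠ p ∈ Q, φ p = 0 := by
    refine finsum_mem_of_eqOn_zero fun x hxQ => ?_
    by_contra hx
    exact eq_empty_iff_forall_notMem.1 hQδ x ⟨hxQ, hφsupp hx⟩
  have hlim := hPQ φ hφc hφcpt
  rw [hQsum] at hlim
  refine ⟨δ / 2, half_pos hδ, ?_⟩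
  filter_upwards [hlim.eventually_ne zero_ne_one] with k hk
  refine eq_empty_of_forall_notMem fun p ⟨hpP, hp⟩ => hk ?_
  calc ∑ᶠ x ∈ P k, φ x = φ p := finsum_mem_eq_of_subsingleton_inter (hP k)
        (hφsupp.trans (ball_subset_ball hδr)) hpP (ball_subset_ball (by linarith) hp)
    _ = 1 := hφone (ball_subset_closedBall hp)

end

theorem stmt_3 {M : Type*} [MetricSpace M] [ProperSpace M] (r : ℝ) (hr : 0 < r)
    (P : ℕ → Set M) (hP : ∀ k, ∀ m : M, (P k ∩ Metric.ball m r).Subsingleton)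
    (Q : Set M) (hQ : ∀ m : M, (Q ∩ Metric.ball m r).Subsingleton)
    (hconv : ∀ φ : M → ℝ, Continuous φ → HasCompactSupport φ →
      Tendsto (fun k => ∑ᶠ p ∈ P k, φ p) atTop (𝓝 (∑ᶠ p ∈ Q, φ p))) :
    (∀ m : M,
      Xor' (∀ ε > 0, ∀ᶠ k in atTop, (P k ∩ Metric.ball m ε).Nonempty)
           (∃ ε > 0, ∀ᶠ k in atTop, P k ∩ Metric.ball m ε = ∅)) ∧
    Q = {m : M | ∀ ε > 0, ∀ᶠ k in atTop, (P k ∩ Metric.ball m ε).Nonempty} := by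
  have hA : ∀ m ∈ Q, ∀ ε > 0, ∀ᶠ k in atTop, (P k ∩ ball m ε).Nonempty := fun m hm _ hε =>
    eventually_nonempty_inter_ball_of_mem hr (hQ m) hconv hm hε
  have hB : ∀ m ∉ Q, ∃ ε > 0, ∀ᶠ k in atTop, P k ∩ ball m ε = ∅ := fun m hm =>
    eventually_inter_ball_eq_empty_of_notMem hr (fun k => hP k m) (hQ m) hconv hm
  have hBnA : ∀ m, (∃ ε > 0, ∀ᶠ k in atTop, P k ∩ ball m ε = ∅) →
      ¬ ∀ ε > 0, ∀ᶠ k in atTop, (P k ∩ ball m ε).Nonempty := by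
    rintro m ⟨ε, hε, hempty⟩ hne
    obtain ⟨k, hk, hk'⟩ := (hempty.and (hne ε hε)).exists
    exact hk'.ne_empty hk
  refine ⟨fun m => ?_, Set.ext fun m => ⟨hA m, fun ha => ?_⟩⟩
  · by_cases hm : m ∈ Q
    · exact Or.inl ⟨hA m hm, fun hb => hBnA m hb (hA m hm)⟩
    · exact Or.inr ⟨hB m hm, hBnA m (hB m hm)⟩
  · by_contra hm
    exact hBnA m (hB m hm) ha
end

section
/- Let (M,d) be a proper metric space and r > 0. Every sequence (Pₙ) of r-uniformly discrete subsets of M has a subsequence (P_{n_k}) and an r-uniformly discrete set P ⊆ M such that for every φ : M → ℝ continuous with compact support, ∑_{p∈P_{n_k}} φ(p) → ∑_{p∈P} φ(p) as k → ∞. (Sequential compactness of the space of r-uniformly discrete point sets in the vague topology.) -/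
/-!
Encode a set `S` by its distance function truncated at `1`. These functions are `1`-Lipschitz with
values in `[0, 1]`, so a diagonal argument over a countable dense set gives a subsequence along
which they converge pointwise to some `g`; the limit set is the zero set of `g`. Each of its points
is approximated by points of `P (σ k)`, which makes it `r`-uniformly discrete; conversely `g` is
positive on a compact set disjoint from the limit set, so `P (σ k)` eventually misses that set.
Hence on the support of `φ` the points of `P (σ k)` are eventually matched one-to-one with the
finitely many points of the limit set, each converging to its partner.
-/

open Filter Topology Metric Set

theorem Equicontinuous.cauchySeq_of_dense {X α : Type*} [TopologicalSpace X]
    [PseudoMetricSpace α] {f : ℕ → X → α} (hf : Equicontinuous f) {s : Set X} (hs : Dense s)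
    (hcs : ∀ y ∈ s, CauchySeq fun n => f n y) (x : X) : CauchySeq fun n => f n x := by
  refine Metric.cauchySeq_iff'.2 fun ε hε => ?_
  have hclose := Metric.equicontinuousAt_iff_right.1 (hf x) (ε / 3) (by positivity)
  obtain ⟨y, hxy, hys⟩ := (hclose.and_frequently (mem_closure_iff_frequently.1 (hs x))).exists
  obtain ⟨N, hN⟩ := Metric.cauchySeq_iff'.1 (hcs y hys) (ε / 3) (by positivity)
  refine ⟨N, fun n hn => ?_⟩
  calc dist (f n x) (f N x)
      ≤ dist (f n x) (f n y) + dist (f n y) (f N y) + dist (f N y) (f N x) := dist_triangle4 ..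
    _ < ε / 3 + ε / 3 + ε / 3 := by
      gcongr
      exacts [hxy n, hN n hn, dist_comm (f N x) _ ▸ hxy N]
    _ = ε := by ring

theorem exists_strictMono_forall_tendsto_of_equicontinuous {X α : Type*} [TopologicalSpace X]
    [TopologicalSpace.SeparableSpace X] [PseudoMetricSpace α] {f : ℕ → X → α}
    (hf : Equicontinuous f) {C : Set α} (hC : IsCompact C) (hfC : ∀ n x, f n x ∈ C) :
    ∃ σ : ℕ → ℕ, StrictMono σ ∧ ∀ x, ∃ y ∈ C, Tendsto (fun k => f (σ k) x) atTop (𝓝 y) := by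
  obtain ⟨s, hsc, hsd⟩ := TopologicalSpace.exists_countable_dense X
  have := hsc.to_subtype
  obtain ⟨_, -, σ, hσ, hlim⟩ := (isCompact_univ_pi fun _ : s => hC).tendsto_subseq
    (x := fun n (y : s) => f n y) fun n => mem_univ_pi.2 fun y => hfC n y
  refine ⟨σ, hσ, fun x => cauchySeq_tendsto_of_isComplete hC.isComplete (fun k => hfC _ x) ?_⟩
  exact (hf.comp σ).cauchySeq_of_dense hsd
    (fun y hy => (tendsto_pi_nhds.1 hlim ⟨y, hy⟩).cauchySeq) x

theorem finsum_mem_eq_sum_comp_of_injOn {α β R : Type*} [AddCommMonoid R] {S : Set α}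
    {F : Finset β} {e : β → α} {φ : α → R} (he : InjOn e F) (hmaps : MapsTo e F S)
    (hsupp : S ∩ Function.support φ ⊆ e '' F) : ∑ᶠ p ∈ S, φ p = ∑ q ∈ F, φ (e q) := by
  rw [← finsum_mem_coe_finset, ← finsum_mem_image he]
  refine finsum_mem_inter_support_eq φ S _ (subset_antisymm ?_ ?_)
  · exact fun p hp => ⟨hsupp hp, hp.2⟩
  · exact inter_subset_inter_left _ hmaps.image_subset

section MetricSpace

variable {M : Type*} [MetricSpace M]

/-- Built from `infEDist` rather than `infDist`, so that the empty set gets the value `1`, not the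
junk value `0`. -/
noncomputable def truncInfDist (S : Set M) (x : M) : ℝ :=
  (min (infEDist x S) 1).toReal

theorem truncInfDist_mem_Icc (S : Set M) (x : M) : truncInfDist S x ∈ Icc (0 : ℝ) 1 :=
  ⟨ENNReal.toReal_nonneg, ENNReal.toReal_le_of_le_ofReal zero_le_one (by simp)⟩

theorem truncInfDist_le_add_dist (S : Set M) (x y : M) :
    truncInfDist S x ≤ truncInfDist S y + dist x y := by
  have h : min (infEDist x S) 1 ≤ min (infEDist y S) 1 + edist x y := by
    rw [← min_add_add_right]
    exact min_le_min infEDist_le_infEDist_add_edist le_self_add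
  rw [dist_edist]
  exact ENNReal.toReal_le_add h (ne_top_of_le_ne_top ENNReal.one_ne_top (min_le_right _ _))
    (edist_ne_top x y)

theorem lipschitzWith_truncInfDist (S : Set M) : LipschitzWith 1 (truncInfDist S) :=
  LipschitzWith.of_le_add (truncInfDist_le_add_dist S)

theorem truncInfDist_eq_zero_of_mem {S : Set M} {x : M} (hx : x ∈ S) : truncInfDist S x = 0 := by
  simp [truncInfDist, infEDist_zero_of_mem hx]

theorem exists_dist_lt_of_truncInfDist_lt {S : Set M} {x : M} {ε : ℝ} (hε : ε ≤ 1)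
    (h : truncInfDist S x < ε) : ∃ p ∈ S, dist x p < ε := by
  have hne : min (infEDist x S) 1 ≠ ⊤ := ne_top_of_le_ne_top ENNReal.one_ne_top (min_le_right _ _)
  have hlt : min (infEDist x S) 1 < ENNReal.ofReal ε := (ENNReal.lt_ofReal_iff_toReal_lt hne).2 h
  have : infEDist x S < ENNReal.ofReal ε := by
    refine (min_lt_iff.1 hlt).resolve_right fun h1 => ?_
    exact h1.not_ge (ENNReal.ofReal_le_one.2 hε)
  obtain ⟨p, hpS, hp⟩ := infEDist_lt_iff.1 this
  exact ⟨p, hpS, edist_lt_ofReal.1 hp⟩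

def UniformlyDiscrete (r : ℝ) (S : Set M) : Prop :=
  ∀ m, (S ∩ ball m r).Subsingleton

namespace UniformlyDiscrete

variable {r : ℝ} {S : Set M}

theorem mono {T : Set M} (hS : UniformlyDiscrete r S) (hT : T ⊆ S) : UniformlyDiscrete r T :=
  fun m => (hS m).anti (inter_subset_inter_left _ hT)

theorem eq_of_dist_lt (hS : UniformlyDiscrete r S) {p q : M} (hp : p ∈ S) (hq : q ∈ S)
    (hpq : dist p q < r) : p = q :=
  hS p ⟨hp, mem_ball_self (dist_nonneg.trans_lt hpq)⟩ ⟨hq, mem_ball'.2 hpq⟩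

theorem finite_inter (hr : 0 < r) (hS : UniformlyDiscrete r S) {K : Set M} (hK : IsCompact K) :
    (S ∩ K).Finite := by
  obtain ⟨t, -, ht, hKt⟩ := finite_cover_balls_of_compact hK hr
  refine (ht.biUnion fun m _ => (hS m).finite).subset ?_
  rw [← inter_iUnion₂]
  exact inter_subset_inter_right S hKt

theorem finsum_mem_eq_sum {R : Type*} [AddCommMonoid R] (hS : UniformlyDiscrete r S)
    {F : Finset M} (hF : UniformlyDiscrete r (F : Set M)) {e : M → M}
    (he : ∀ q ∈ F, e q ∈ S ∩ ball q (r / 2)) {φ : M → R}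
    (hcover : S ∩ Function.support φ ⊆ ⋃ q ∈ F, ball q (r / 2)) :
    ∑ᶠ p ∈ S, φ p = ∑ q ∈ F, φ (e q) := by
  refine finsum_mem_eq_sum_comp_of_injOn (fun q hq q' hq' heq => ?_) (fun q hq => (he q hq).1) ?_
  · refine hF.eq_of_dist_lt hq hq' ?_
    calc dist q q' ≤ dist q (e q) + dist (e q') q' := heq ▸ dist_triangle _ _ _
      _ < r / 2 + r / 2 := add_lt_add (mem_ball'.1 (he q hq).2) (mem_ball.1 (he q' hq').2)
      _ = r := add_halves r
  · intro p hp
    obtain ⟨q, hq, hpq⟩ := mem_iUnion₂.1 (hcover hp)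
    have hball : ball q (r / 2) ⊆ ball q r := ball_subset_ball (half_le_self (by
      linarith [pos_of_mem_ball hpq]))
    exact ⟨q, hq, hS q ⟨(he q hq).1, hball (he q hq).2⟩ ⟨hp.1, hball hpq⟩⟩

end UniformlyDiscrete

section Limit

variable {ι : Type*} {l : Filter ι} {P : ι → Set M}

theorem eventually_inter_nonempty_of_tendsto_truncInfDist {x : M}
    (hx : Tendsto (fun k => truncInfDist (P k) x) l (𝓝 0)) {U : Set M} (hU : U ∈ 𝓝 x) :
    ∀ᶠ k in l, (P k ∩ U).Nonempty := by
  obtain ⟨ε, hε, hεU⟩ := Metric.mem_nhds_iff.1 hU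
  filter_upwards [hx.eventually (gt_mem_nhds (lt_min hε one_pos))] with k hk
  obtain ⟨p, hp, hxp⟩ := exists_dist_lt_of_truncInfDist_lt (min_le_right ε 1) hk
  exact ⟨p, hp, hεU (mem_ball'.2 (hxp.trans_le (min_le_left _ _)))⟩

theorem tendsto_of_forall_mem_inter_ball {r s : ℝ} (hP : ∀ k, UniformlyDiscrete r (P k)) {q : M}
    (hq : Tendsto (fun k => truncInfDist (P k) q) l (𝓝 0)) (hs : 0 < s) (hsr : s ≤ r)
    {e : ι → M} (he : ∀ k, (P k ∩ ball q s).Nonempty → e k ∈ P k ∩ ball q s) :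
    Tendsto e l (𝓝 q) := by
  intro U hU
  rw [mem_map]
  filter_upwards [eventually_inter_nonempty_of_tendsto_truncInfDist hq
    (inter_mem hU (ball_mem_nhds q hs))] with k ⟨p, hpP, hpU, hpq⟩
  have hek := he k ⟨p, hpP, hpq⟩
  obtain rfl : p = e k :=
    hP k q ⟨hpP, ball_subset_ball hsr hpq⟩ ⟨hek.1, ball_subset_ball hsr hek.2⟩
  exact hpU

variable [l.NeBot] {g : M → ℝ} (hg : ∀ x, Tendsto (fun k => truncInfDist (P k) x) l (𝓝 (g x)))
include hg

theorem uniformlyDiscrete_setOf_eq_zero {r : ℝ} (hP : ∀ k, UniformlyDiscrete r (P k)) :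
    UniformlyDiscrete r {x | g x = 0} := by
  intro m x ⟨hx, hxm⟩ y ⟨hy, hym⟩
  refine eq_of_forall_dist_le fun ε hε => ?_
  have hnear : ∀ z, g z = 0 → z ∈ ball m r →
      ∀ᶠ k in l, (P k ∩ (ball m r ∩ ball z (ε / 2))).Nonempty := fun z hz hzm =>
    eventually_inter_nonempty_of_tendsto_truncInfDist (hz ▸ hg z)
      (inter_mem (isOpen_ball.mem_nhds hzm) (ball_mem_nhds z (half_pos hε)))
  obtain ⟨k, ⟨p, hp, hpm, hpx⟩, q, hq, hqm, hqy⟩ := ((hnear x hx hxm).and (hnear y hy hym)).exists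
  obtain rfl : p = q := hP k m ⟨hp, hpm⟩ ⟨hq, hqm⟩
  calc dist x y ≤ dist x p + dist p y := dist_triangle _ _ _
    _ ≤ ε / 2 + ε / 2 := add_le_add (mem_ball'.1 hpx).le (mem_ball.1 hqy).le
    _ = ε := add_halves ε

theorem eventually_inter_subset_of_tendsto_truncInfDist {K U : Set M} (hK : IsCompact K)
    (hU : IsOpen U) (hKU : K ∩ {x | g x = 0} ⊆ U) : ∀ᶠ k in l, P k ∩ K ⊆ U := by
  have hpos : ∀ y ∈ K \ U, 0 < g y := fun y hy =>
    lt_of_le_of_ne (ge_of_tendsto' (hg y) fun k => (truncInfDist_mem_Icc _ _).1)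
      fun h => hy.2 (hKU ⟨hy.1, h.symm⟩)
  have hlocal : ∀ y ∈ K \ U, ∀ᶠ z : ι × M in l ×ˢ 𝓝 y, z.2 ∉ P z.1 := by
    intro y hy
    have hgy := hpos y hy
    refine ((hg y).eventually (lt_mem_nhds (half_lt_self hgy))).prod_mk
      (ball_mem_nhds y (half_pos hgy)) |>.mono ?_
    rintro ⟨k, z⟩ ⟨hk, hz⟩ hzP
    have := truncInfDist_le_add_dist (P k) y z
    rw [truncInfDist_eq_zero_of_mem hzP] at this
    linarith [mem_ball'.1 hz]
  have hglobal : ∀ᶠ z : ι × M in l ×ˢ 𝓝ˢ (K \ U), z.2 ∉ P z.1 :=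
    (hK.diff hU).mem_prod_nhdsSet_of_forall hlocal
  filter_upwards [hglobal.curry] with k hk
  exact fun z ⟨hzP, hzK⟩ => by_contra fun hzU => hk.self_of_nhdsSet z ⟨hzK, hzU⟩ hzP

theorem tendsto_finsum_mem_setOf_eq_zero {E : Type*} [TopologicalSpace E] [AddCommMonoid E]
    [ContinuousAdd E] {r : ℝ} (hr : 0 < r) (hP : ∀ k, UniformlyDiscrete r (P k)) {φ : M → E}
    (hφ : Continuous φ) (hφs : HasCompactSupport φ) :
    Tendsto (fun k => ∑ᶠ p ∈ P k, φ p) l (𝓝 (∑ᶠ p ∈ {x | g x = 0}, φ p)) := by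
  set Q := {x | g x = 0}
  have hQ : UniformlyDiscrete r Q := uniformlyDiscrete_setOf_eq_zero hg hP
  have hQK := hQ.finite_inter hr hφs.isCompact
  set F := hQK.toFinset
  have hFQ : (F : Set M) ⊆ Q := fun q hq => (hQK.mem_toFinset.1 hq).1
  have hsel : ∀ k (q : M), ∃ p, (P k ∩ ball q (r / 2)).Nonempty → p ∈ P k ∩ ball q (r / 2) :=
    fun k q => (em _).elim (fun h => ⟨h.some, fun _ => h.some_mem⟩)
      fun h => ⟨q, fun h' => (h h').elim⟩
  choose e he using hsel
  have hsumQ : ∑ᶠ p ∈ Q, φ p = ∑ q ∈ F, φ q :=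
    finsum_mem_eq_sum_comp_of_injOn (e := id) (injOn_id _) (fun q hq => hFQ hq) fun p hp =>
      ⟨p, hQK.mem_toFinset.2 ⟨hp.1, subset_tsupport φ hp.2⟩, rfl⟩
  have hnear : ∀ᶠ k in l, ∀ q ∈ F, (P k ∩ ball q (r / 2)).Nonempty :=
    (eventually_all_finset F).2 fun q hq =>
      eventually_inter_nonempty_of_tendsto_truncInfDist (hFQ hq ▸ hg q)
        (ball_mem_nhds q (half_pos hr))
  have hcover : ∀ᶠ k in l, P k ∩ tsupport φ ⊆ ⋃ q ∈ F, ball q (r / 2) :=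
    eventually_inter_subset_of_tendsto_truncInfDist hg hφs.isCompact
      (isOpen_biUnion fun _ _ => isOpen_ball) fun q hq =>
        mem_biUnion (hQK.mem_toFinset.2 ⟨hq.2, hq.1⟩) (mem_ball_self (half_pos hr))
  have hsumP : ∀ᶠ k in l, ∑ q ∈ F, φ (e k q) = ∑ᶠ p ∈ P k, φ p := by
    filter_upwards [hnear, hcover] with k hk hk'
    exact ((hP k).finsum_mem_eq_sum (hQ.mono hFQ) (fun q hq => he k q (hk q hq))
      ((inter_subset_inter_right _ (subset_tsupport φ)).trans hk')).symm
  have he_tendsto : ∀ q ∈ F, Tendsto (fun k => e k q) l (𝓝 q) := fun q hq =>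
    tendsto_of_forall_mem_inter_ball hP (hFQ hq ▸ hg q) (half_pos hr) (half_le_self hr.le) (he · q)
  rw [hsumQ]
  exact (tendsto_finsetSum F fun q hq => (hφ.tendsto q).comp (he_tendsto q hq)).congr' hsumP

end Limit

end MetricSpace

theorem stmt_5 {M : Type*} [MetricSpace M] [ProperSpace M] (r : ℝ) (hr : 0 < r)
    (P : ℕ → Set M) (hP : ∀ k, ∀ m : M, (P k ∩ Metric.ball m r).Subsingleton) :
    ∃ (σ : ℕ → ℕ) (Q : Set M), StrictMono σ ∧
      (∀ m : M, (Q ∩ Metric.ball m r).Subsingleton) ∧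
      ∀ φ : M → ℝ, Continuous φ → HasCompactSupport φ →
        Tendsto (fun k => ∑ᶠ p ∈ P (σ k), φ p) atTop (𝓝 (∑ᶠ p ∈ Q, φ p)) := by
  have hequi : Equicontinuous fun n => truncInfDist (P n) :=
    (LipschitzWith.uniformEquicontinuous _ 1 fun n =>
      lipschitzWith_truncInfDist (P n)).equicontinuous
  obtain ⟨σ, hσ, hlim⟩ := exists_strictMono_forall_tendsto_of_equicontinuous hequi isCompact_Icc
    fun n x => truncInfDist_mem_Icc (P n) x
  choose g _ hg using hlim
  have hPσ : ∀ k, UniformlyDiscrete r (P (σ k)) := fun k => hP (σ k)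
  exact ⟨σ, {x | g x = 0}, hσ, uniformlyDiscrete_setOf_eq_zero hg hPσ,
    fun φ hφ hφs => tendsto_finsum_mem_setOf_eq_zero hg hr hPσ hφ hφs⟩
end

section
/- Let T be a group acting on sets, K ⊆ T, and D, E ⊆ T. Then for any L ⊆ T, L·(∂^K D) ⊆ ∂^{L·K} D ∪ ∂^L D, where ∂^K D := ((K·D) \ int(D)) ∪ ((K·cl(Dᶜ)) \ Dᶜ) with D a subset of the topological group T. -/
open Pointwise

/-- The van Hove boundary `∂^K D` of a subset `D` of a topological group
with respect to `K`. -/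
def vanHoveBoundary {T : Type*} [Group T] [TopologicalSpace T] (K D : Set T) : Set T :=
  ((K * D) \ interior D) ∪ ((K * closure Dᶜ) \ Dᶜ)

theorem Set.mul_diff_subset_union {α : Type*} [Mul α] (s t u : Set α) :
    s * (t \ u) ⊆ ((s * t) \ u) ∪ (s * uᶜ ∩ u) := by
  intro y hy
  have hst : y ∈ s * t := Set.mul_subset_mul_left Set.sdiff_subset hy
  have hsu : y ∈ s * uᶜ := Set.mul_subset_mul_left (fun _ hx => hx.2) hy
  by_cases hyu : y ∈ u
  · exact Or.inr ⟨hsu, hyu⟩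
  · exact Or.inl ⟨hst, hyu⟩

section VanHoveBoundary

variable {T : Type*} [Group T] [TopologicalSpace T]

theorem mul_compl_interior_inter_interior_subset_vanHoveBoundary (L D : Set T) :
    L * (interior D)ᶜ ∩ interior D ⊆ vanHoveBoundary L D := by
  rintro y ⟨hy, hyD⟩
  rw [← closure_compl] at hy
  exact Or.inr ⟨hy, not_not.mpr (interior_subset hyD)⟩

theorem mul_inter_compl_subset_vanHoveBoundary (L D : Set T) :
    L * D ∩ Dᶜ ⊆ vanHoveBoundary L D :=
  fun _ ⟨hy, hyD⟩ => Or.inl ⟨hy, fun hint => hyD (interior_subset hint)⟩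

end VanHoveBoundary

theorem stmt_8_general {T : Type*} [Group T] [TopologicalSpace T]
    (K L D : Set T) :
    L * vanHoveBoundary K D ⊆ vanHoveBoundary (L * K) D ∪ vanHoveBoundary L D := by
  rw [vanHoveBoundary, Set.mul_union]
  refine Set.union_subset ?_ ?_
  · refine (Set.mul_diff_subset_union _ _ _).trans (Set.union_subset_union ?_ ?_)
    · rw [← mul_assoc]
      exact Set.subset_union_left
    · exact mul_compl_interior_inter_interior_subset_vanHoveBoundary L D
  · refine (Set.mul_diff_subset_union _ _ _).trans (Set.union_subset_union ?_ ?_)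
    · rw [← mul_assoc]
      exact Set.subset_union_right
    · rw [compl_compl]
      exact mul_inter_compl_subset_vanHoveBoundary L D

theorem stmt_8 {T : Type*} [Group T] [TopologicalSpace T] [IsTopologicalGroup T]
    (K L D : Set T) :
    L * vanHoveBoundary K D ⊆ vanHoveBoundary (L * K) D ∪ vanHoveBoundary L D :=
  stmt_8_general K L D
end

section
/- Under the same hypotheses, if (Dₙ) is moreover a van Hove sequence, then for every compact K ⊆ T and every relatively compact U ⊆ M, card(P ∩ (∂^K Dₙ)⁻¹·U) = o(vol(Dₙ)) as n → ∞, uniformly in r-uniformly discrete sets P ⊆ M. -/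
/-!
Fix a compact neighbourhood `K₀` of `1` with interior `V`. The compact set `K₀ • closure U` is
covered by finitely many, say `N`, balls of radius `r`, so each of its translates contains at most
`N` points of an `r`-uniformly discrete set `P`. For `p ∈ P ∩ B⁻¹ • U`, where `B = ∂^K Dₙ`, pick
`x_p ∈ B` with `x_p • p ∈ U`. The sets `V x_p` have measure `vol V` by right invariance, lie in
`V B ⊆ ∂^(K₀ ∪ K₀ K) Dₙ`, and overlap at most `N`-fold, since `t ∈ V x_p` forces
`t • p ∈ K₀ • closure U`. Hence `card (P ∩ B⁻¹ • U) · vol V ≤ N · vol (∂^(K₀ ∪ K₀ K) Dₙ)`, which is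
`o(vol Dₙ)` by the van Hove property.
-/

open Filter Topology Pointwise MeasureTheory

open scoped ENNReal Finset

def IsUniformlyDiscrete {M : Type*} [PseudoMetricSpace M] (r : ℝ) (P : Set M) : Prop :=
  ∀ m, (P ∩ Metric.ball m r).Subsingleton

section Packing

variable {M : Type*} [PseudoMetricSpace M] {r : ℝ} {P : Set M}

theorem IsUniformlyDiscrete.encard_inter_biUnion_ball_le {ι : Type*} (hP : IsUniformlyDiscrete r P)
    (s : Finset ι) (c : ι → M) : (P ∩ ⋃ i ∈ s, Metric.ball (c i) r).encard ≤ s.card := by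
  rw [Set.inter_iUnion₂]
  calc (⋃ i ∈ s, P ∩ Metric.ball (c i) r).encard
      ≤ ∑ i ∈ s, (P ∩ Metric.ball (c i) r).encard := s.set_encard_biUnion_le _
    _ ≤ ∑ _i ∈ s, 1 := Finset.sum_le_sum fun i _ => Set.encard_le_one_iff_subsingleton.2 (hP _)
    _ = s.card := by simp

theorem IsUniformlyDiscrete.finite_inter_of_isCompact (hP : IsUniformlyDiscrete r P) (hr : 0 < r)
    {C : Set M} (hC : IsCompact C) : (P ∩ C).Finite := by
  obtain ⟨t, -, ht, hcov⟩ := hC.finite_cover_balls hr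
  refine Set.finite_of_encard_le_coe
    ((Set.encard_mono (Set.inter_subset_inter_right P ?_)).trans
      (hP.encard_inter_biUnion_ball_le ht.toFinset id))
  simpa using hcov

theorem IsCompact.exists_encard_inter_smul_le (G : Type*) [Group G] [MulAction G M]
    [IsIsometricSMul G M] {C : Set M} (hC : IsCompact C) (hr : 0 < r) :
    ∃ N : ℕ, ∀ P : Set M, IsUniformlyDiscrete r P → ∀ g : G, (P ∩ g • C).encard ≤ N := by
  obtain ⟨t, -, ht, hcov⟩ := hC.finite_cover_balls hr
  refine ⟨ht.toFinset.card, fun P hP g => ?_⟩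
  have hgcov : g • C ⊆ ⋃ c ∈ ht.toFinset, Metric.ball (g • c) r := by
    simpa [Set.smul_set_iUnion₂] using Set.smul_set_mono (a := g) hcov
  exact (Set.encard_mono (Set.inter_subset_inter_right P hgcov)).trans
    (hP.encard_inter_biUnion_ball_le _ _)

end Packing

open Classical in
theorem Finset.sum_measure_le_mul_measure_biUnion {α ι : Type*} [MeasurableSpace α]
    (μ : Measure α) {s : Finset ι} {A : ι → Set α} (hA : ∀ i ∈ s, MeasurableSet (A i))
    {N : ℕ} (hmult : ∀ x, #{i ∈ s | x ∈ A i} ≤ N) :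
    ∑ i ∈ s, μ (A i) ≤ N * μ (⋃ i ∈ s, A i) := by
  set S := ⋃ i ∈ s, A i
  have hpointwise : ∀ x, ∑ i ∈ s, (A i).indicator 1 x ≤ S.indicator (fun _ => (N : ℝ≥0∞)) x := by
    intro x
    by_cases hx : x ∈ S
    · simp only [Set.indicator_of_mem hx, Set.indicator_apply, Pi.one_apply, Finset.sum_boole]
      exact_mod_cast hmult x
    · have hxA : ∀ i ∈ s, x ∉ A i := fun i hi hxi => hx (Set.mem_biUnion hi hxi)
      rw [Set.indicator_of_notMem hx]
      exact (Finset.sum_eq_zero fun i hi => Set.indicator_of_notMem (hxA i hi) _).le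
  calc ∑ i ∈ s, μ (A i) = ∫⁻ x, ∑ i ∈ s, (A i).indicator 1 x ∂μ := by
        rw [lintegral_finsetSum _ fun i hi => measurable_one.indicator (hA i hi)]
        exact Finset.sum_congr rfl fun i hi => (lintegral_indicator_one (hA i hi)).symm
    _ ≤ ∫⁻ x, S.indicator (fun _ => (N : ℝ≥0∞)) x ∂μ := lintegral_mono hpointwise
    _ = N * μ S := lintegral_indicator_const (s.measurableSet_biUnion hA) _

theorem Finset.card_mul_measure_le_mul_measure_mul {T M : Type*} [Group T] [MeasurableSpace T]
    [MeasurableMul T] [MulAction T M] {μ : Measure T} [μ.IsMulRightInvariant] {V : Set T}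
    (hV : MeasurableSet V) {U P : Set M} {N : ℕ} (hN : ∀ g : T, (P ∩ g • (V • U)).encard ≤ N)
    {B : Set T} {F : Finset M} (hF : ↑F ⊆ P ∩ B⁻¹ • U) :
    F.card * μ V ≤ N * μ (V * B) := by
  classical
  have hx : ∀ p ∈ F, ∃ x ∈ B, x • p ∈ U := by
    intro p hp
    obtain ⟨y, hy, u, hu, rfl⟩ := (hF hp).2
    exact ⟨y⁻¹, hy, by rwa [inv_smul_smul]⟩
  choose! x hxB hxU using hx
  set A : M → Set T := fun p => (· * (x p)⁻¹) ⁻¹' V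
  have hA : ∀ p ∈ F, MeasurableSet (A p) := fun p _ => hV.preimage (measurable_mul_const _)
  have hAV : ∀ p ∈ F, A p ⊆ V * B := fun p hp t ht =>
    ⟨t * (x p)⁻¹, ht, x p, hxB p hp, inv_mul_cancel_right t (x p)⟩
  have hmult : ∀ t, #{p ∈ F | t ∈ A p} ≤ N := by
    intro t
    have hsub : (↑{p ∈ F | t ∈ A p} : Set M) ⊆ P ∩ t⁻¹ • (V • U) := by
      intro p hp
      obtain ⟨hpF, ht⟩ := Finset.mem_filter.1 hp
      refine ⟨(hF hpF).1, t • p, ⟨_, ht, _, hxU p hpF, ?_⟩, inv_smul_smul t p⟩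
      simp only [smul_smul, inv_mul_cancel_right]
    exact_mod_cast (Set.encard_coe_eq_coe_finsetCard _ ▸ Set.encard_mono hsub).trans (hN t⁻¹)
  calc (F.card : ℝ≥0∞) * μ V = ∑ p ∈ F, μ (A p) := by
        simp [A, measure_preimage_mul_right]
    _ ≤ N * μ (⋃ p ∈ F, A p) := F.sum_measure_le_mul_measure_biUnion μ hA hmult
    _ ≤ N * μ (V * B) := by gcongr; exact Set.iUnion₂_subset hAV

section VanHoveBoundary

variable {T : Type*} [Group T] [TopologicalSpace T]

theorem vanHoveBoundary_subset (K D : Set T) : vanHoveBoundary K D ⊆ K * D ∪ D := by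
  rintro x (⟨hx, -⟩ | ⟨-, hx⟩)
  · exact Or.inl hx
  · exact Or.inr (not_not.1 hx)

theorem mul_vanHoveBoundary_subset (K₀ K D : Set T) :
    K₀ * vanHoveBoundary K D ⊆ vanHoveBoundary (K₀ ∪ K₀ * K) D := by
  rintro _ ⟨v, hv, y, ⟨⟨k, hk, d, hd, rfl⟩, hy⟩ | ⟨⟨k, hk, d, hd, rfl⟩, hy⟩, rfl⟩
  · by_cases hint : v * (k * d) ∈ interior D
    · refine Or.inr ⟨⟨v, Or.inl hv, k * d, ?_, rfl⟩, not_not.2 (interior_subset hint)⟩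
      rwa [closure_compl]
    · exact Or.inl ⟨⟨v * k, Or.inr ⟨v, hv, k, hk, rfl⟩, d, hd, mul_assoc _ _ _⟩, hint⟩
  · by_cases hc : v * (k * d) ∈ Dᶜ
    · exact Or.inl ⟨⟨v, Or.inl hv, k * d, not_not.1 hy, rfl⟩, fun h => hc (interior_subset h)⟩
    · exact Or.inr ⟨⟨v * k, Or.inr ⟨v, hv, k, hk, rfl⟩, d, hd, mul_assoc _ _ _⟩, hc⟩

theorem IsCompact.measure_vanHoveBoundary_lt_top [ContinuousMul T] [MeasurableSpace T]
    {μ : Measure T} [IsFiniteMeasureOnCompacts μ] {K D : Set T} (hK : IsCompact K)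
    (hD : IsCompact D) : μ (vanHoveBoundary K D) < ∞ :=
  (measure_mono (vanHoveBoundary_subset K D)).trans_lt ((hK.mul hD).union hD).measure_lt_top

end VanHoveBoundary

theorem eventually_measure_pos_of_iUnion_interior {α ι : Type*} [TopologicalSpace α]
    [MeasurableSpace α] [Nonempty α] [Preorder ι] {μ : Measure α} [μ.IsOpenPosMeasure]
    {D : ι → Set α} (hmono : Monotone D) (hunion : ⋃ i, interior (D i) = Set.univ) :
    ∀ᶠ i in atTop, 0 < μ (D i) := by
  obtain ⟨i₀, hi₀⟩ := Set.mem_iUnion.1 (hunion ▸ Set.mem_univ (Classical.arbitrary α))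
  filter_upwards [eventually_ge_atTop i₀] with i hi
  exact (isOpen_interior.measure_pos μ ⟨_, hi₀⟩).trans_le
    (measure_mono (interior_subset.trans (hmono hi)))

theorem IsUniformlyDiscrete.ncard_mul_measure_le_vanHoveBoundary {T M : Type*} [Group T]
    [TopologicalSpace T] [IsTopologicalGroup T] [MeasurableSpace T] [BorelSpace T]
    [PseudoMetricSpace M] [MulAction T M] [ContinuousSMul T M] {μ : Measure T}
    [μ.IsMulRightInvariant] [IsFiniteMeasureOnCompacts μ] {r : ℝ} {P : Set M}
    (hP : IsUniformlyDiscrete r P) (hr : 0 < r) {K₀ V K D : Set T} (hV : MeasurableSet V)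
    (hVK₀ : V ⊆ K₀) (hK₀ : IsCompact K₀) (hK : IsCompact K) (hD : IsCompact D) {U : Set M}
    (hU : IsCompact (closure U)) {N : ℕ} (hN : ∀ g : T, (P ∩ g • (V • U)).encard ≤ N) :
    ((P ∩ (vanHoveBoundary K D)⁻¹ • U).ncard : ℝ) * (μ V).toReal
      ≤ N * (μ (vanHoveBoundary (K₀ ∪ K₀ * K) D)).toReal := by
  have hfin : (P ∩ (vanHoveBoundary K D)⁻¹ • U).Finite :=
    (hP.finite_inter_of_isCompact hr (((hK.mul hD).union hD).inv.smul_set hU)).subset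
      (Set.inter_subset_inter_right P
        (Set.smul_subset_smul (Set.inv_subset_inv.2 (vanHoveBoundary_subset K D)) subset_closure))
  have hcount : (hfin.toFinset.card : ℝ≥0∞) * μ V
      ≤ N * μ (vanHoveBoundary (K₀ ∪ K₀ * K) D) := by
    refine (hfin.toFinset.card_mul_measure_le_mul_measure_mul hV hN
      hfin.coe_toFinset.subset).trans ?_
    gcongr
    exact (Set.mul_subset_mul_right hVK₀).trans (mul_vanHoveBoundary_subset K₀ K D)
  rw [Set.ncard_eq_toFinset_card _ hfin]
  simpa using ENNReal.toReal_mono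
    (ENNReal.mul_ne_top (by simp) ((hK₀.union (hK₀.mul hK)).measure_vanHoveBoundary_lt_top hD).ne)
    hcount

theorem stmt_16_general {T M : Type*} [Group T] [TopologicalSpace T] [IsTopologicalGroup T]
    [LocallyCompactSpace T]
    [MeasurableSpace T] [BorelSpace T]
    [MetricSpace M]
    [MulAction T M] [ContinuousSMul T M]
    (hiso : ∀ (x : T) (m m' : M), dist (x • m) (x • m') = dist m m')
    (vol : Measure T) [vol.IsHaarMeasure] [vol.IsMulRightInvariant]
    (D : ℕ → Set T)
    (hcomp : ∀ n, IsCompact (D n))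
    (hmono : Monotone D) (hunion : ⋃ n, interior (D n) = Set.univ)
    (hvanHove : ∀ K : Set T, IsCompact K →
      Tendsto (fun n => (vol (vanHoveBoundary K (D n))).toReal / (vol (D n)).toReal)
        atTop (𝓝 0))
    (r : ℝ) (hr : 0 < r)
    (K : Set T) (hK : IsCompact K)
    (U : Set M) (hU : IsCompact (closure U)) :
    ∀ ε > (0 : ℝ), ∀ᶠ n in atTop,
      ∀ P : Set M, (∀ m : M, (P ∩ Metric.ball m r).Subsingleton) →
        ((P ∩ (vanHoveBoundary K (D n))⁻¹ • U).ncard : ℝ) ≤ ε * (vol (D n)).toReal := by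
  have : IsIsometricSMul T M := ⟨fun x => Isometry.of_dist_eq (hiso x)⟩
  intro ε hε
  obtain ⟨K₀, hK₀, hK₀1⟩ := exists_compact_mem_nhds (1 : T)
  obtain ⟨N, hN⟩ := (hK₀.smul_set hU).exists_encard_inter_smul_le T hr
  set V := interior K₀
  have hV : 0 < (vol V).toReal := ENNReal.toReal_pos
    (isOpen_interior.measure_pos vol ⟨1, mem_interior_iff_mem_nhds.2 hK₀1⟩).ne'
    ((measure_mono interior_subset).trans_lt hK₀.measure_lt_top).ne
  have hδ : 0 < ε * (vol V).toReal / (N + 1) := by positivity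
  filter_upwards [(hvanHove _ (hK₀.union (hK₀.mul hK))).eventually_lt_const hδ,
    eventually_measure_pos_of_iUnion_interior (μ := vol) hmono hunion] with n hratio hDpos
  intro P hP
  have hcount := IsUniformlyDiscrete.ncard_mul_measure_le_vanHoveBoundary (μ := vol) hP hr
    isOpen_interior.measurableSet interior_subset hK₀ hK (hcomp n) hU fun g =>
      (Set.encard_mono (Set.inter_subset_inter_right P (Set.smul_set_mono
        (Set.smul_subset_smul interior_subset subset_closure)))).trans (hN P hP g)
  have hd : 0 < (vol (D n)).toReal := ENNReal.toReal_pos hDpos.ne' (hcomp n).measure_lt_top.ne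
  rw [div_lt_iff₀ hd] at hratio
  refine le_of_mul_le_mul_right (hcount.trans ?_) hV
  calc (N : ℝ) * (vol (vanHoveBoundary (K₀ ∪ K₀ * K) (D n))).toReal
      ≤ (N + 1) * (ε * (vol V).toReal / (N + 1) * (vol (D n)).toReal) := by
        gcongr
        linarith
    _ = ε * (vol (D n)).toReal * (vol V).toReal := by
        field_simp

theorem stmt_16 {T M : Type*} [Group T] [TopologicalSpace T] [IsTopologicalGroup T]
    [LocallyCompactSpace T] [SecondCountableTopology T]
    [MeasurableSpace T] [BorelSpace T]
    [MetricSpace M] [ProperSpace M]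
    [MulAction T M] [ContinuousSMul T M]
    (hproper : IsProperMap (fun p : T × M => (p.1 • p.2, p.2)))
    (hiso : ∀ (x : T) (m m' : M), dist (x • m) (x • m') = dist m m')
    (vol : Measure T) [vol.IsHaarMeasure] [vol.IsMulRightInvariant]
    (D : ℕ → Set T)
    (hcomp : ∀ n, IsCompact (D n)) (hne : ∀ n, (D n).Nonempty)
    (hmono : Monotone D) (hunion : ⋃ n, interior (D n) = Set.univ)
    (hvanHove : ∀ K : Set T, IsCompact K →
      Tendsto (fun n => (vol (vanHoveBoundary K (D n))).toReal / (vol (D n)).toReal)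
        atTop (𝓝 0))
    (r : ℝ) (hr : 0 < r)
    (K : Set T) (hK : IsCompact K)
    (U : Set M) (hU : IsCompact (closure U)) :
    ∀ ε > (0 : ℝ), ∀ᶠ n in atTop,
      ∀ P : Set M, (∀ m : M, (P ∩ Metric.ball m r).Subsingleton) →
        ((P ∩ (vanHoveBoundary K (D n))⁻¹ • U).ncard : ℝ) ≤ ε * (vol (D n)).toReal :=
  stmt_16_general hiso vol D hcomp hmono hunion hvanHove r hr K hK U hU
end

section
/- Let (M,d) be a proper metric space with a continuous, proper, isometric action of a group T. Fix r > 0 and a relatively compact U ⊆ M. Then there is a constant Γ_U (depending only on U and r) such that for every r-uniformly discrete P ⊆ M, every k ≥ 1, and every compact D ⊆ T, the number of k-point subsets Q ⊆ P for which there exists x ∈ D with x·Q ⊆ U is at most Γ_U^{k-1} · card(P ∩ D⁻¹·U). -/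
/-!
Let `S = {g | g • Ū ∩ Ū ≠ ∅}`, compact by properness, and `K = S⁻¹ • Ū`. Every admissible `Q`
lies in `F = P ∩ D⁻¹ • U`. If `q ∈ Q` and `x₀ • q ∈ U`, then any `x` with `x • Q ⊆ U` satisfies
`x * x₀⁻¹ ∈ S`, so `Q ⊆ x₀⁻¹ • K`. As the action is isometric, a translate of `K` contains at most
`Γ` points of the separated set `P`, where `Γ` is the packing number of `K` (finite since `K` is
compact). Hence for each `q ∈ F` at most `Γ ^ (k - 1)` sets `Q` contain `q`, and summing over
`q ∈ F` gives the bound.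
-/

open Pointwise Metric Set
open scoped ENNReal NNReal

namespace Set

variable {α : Type*}

theorem ncard_le_choose_of_mem_of_subset {𝒬 : Set (Set α)} {C : Set α} {q : α} {k : ℕ}
    (hC : C.Finite) (h𝒬 : ∀ Q ∈ 𝒬, q ∈ Q ∧ Q ⊆ C ∧ Q.ncard = k) :
    𝒬.ncard ≤ (C \ {q}).ncard.choose (k - 1) := by
  have hinj : InjOn (· \ {q}) 𝒬 := fun Q₁ h₁ Q₂ h₂ h => by
    rw [← insert_sdiff_self_of_mem (h𝒬 Q₁ h₁).1, ← insert_sdiff_self_of_mem (h𝒬 Q₂ h₂).1]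
    exact congrArg (insert q) h
  have hmaps : (· \ {q}) '' 𝒬 ⊆ {R ⊆ C \ {q} | R.ncard = k - 1} := by
    rintro _ ⟨Q, hQ, rfl⟩
    obtain ⟨hqQ, hQC, hQk⟩ := h𝒬 Q hQ
    exact ⟨sdiff_subset_sdiff_left hQC, by simp only [ncard_sdiff_singleton_of_mem hqQ, hQk]⟩
  calc 𝒬.ncard = ((· \ {q}) '' 𝒬).ncard := hinj.ncard_image.symm
    _ ≤ {R ⊆ C \ {q} | R.ncard = k - 1}.ncard :=
      ncard_le_ncard hmaps (hC.sdiff.finite_subsets.subset fun _ hR => hR.1)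
    _ = (C \ {q}).ncard.choose (k - 1) := ncard_powerset_ncard hC.sdiff _

theorem ncard_le_pow_mul_ncard_of_forall_mem_subset {𝒬 : Set (Set α)} {F : Set α} {k N : ℕ}
    (hF : F.Finite) (hk : 1 ≤ k) (h𝒬 : ∀ Q ∈ 𝒬, Q ⊆ F ∧ Q.ncard = k)
    (hloc : ∀ q ∈ F, ∃ C : Set α, C.Finite ∧ C.ncard ≤ N ∧ ∀ Q ∈ 𝒬, q ∈ Q → Q ⊆ C) :
    𝒬.Finite ∧ 𝒬.ncard ≤ N ^ (k - 1) * F.ncard := by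
  have h𝒬fin : 𝒬.Finite := hF.finite_subsets.subset fun Q hQ => (h𝒬 Q hQ).1
  refine ⟨h𝒬fin, ?_⟩
  have hcover : 𝒬 ⊆ ⋃ q ∈ hF.toFinset, {Q ∈ 𝒬 | q ∈ Q} := by
    intro Q hQ
    obtain ⟨q, hq⟩ := nonempty_of_ncard_ne_zero (by rw [(h𝒬 Q hQ).2]; omega)
    exact mem_biUnion (hF.mem_toFinset.2 ((h𝒬 Q hQ).1 hq)) ⟨hQ, hq⟩
  have hfiber : ∀ q ∈ hF.toFinset, {Q ∈ 𝒬 | q ∈ Q}.ncard ≤ N ^ (k - 1) := by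
    intro q hq
    obtain ⟨C, hC, hCN, hQC⟩ := hloc q (hF.mem_toFinset.1 hq)
    calc {Q ∈ 𝒬 | q ∈ Q}.ncard ≤ (C \ {q}).ncard.choose (k - 1) :=
          ncard_le_choose_of_mem_of_subset hC fun Q hQ =>
            ⟨hQ.2, hQC Q hQ.1 hQ.2, (h𝒬 Q hQ.1).2⟩
      _ ≤ (C \ {q}).ncard ^ (k - 1) := Nat.choose_le_pow _ _
      _ ≤ N ^ (k - 1) := Nat.pow_le_pow_left ((ncard_le_ncard sdiff_subset hC).trans hCN) _
  calc 𝒬.ncard ≤ (⋃ q ∈ hF.toFinset, {Q ∈ 𝒬 | q ∈ Q}).ncard :=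
        ncard_le_ncard hcover (h𝒬fin.subset (iUnion₂_subset fun _ _ => sep_subset _ _))
    _ ≤ ∑ q ∈ hF.toFinset, {Q ∈ 𝒬 | q ∈ Q}.ncard := Finset.set_ncard_biUnion_le _ _
    _ ≤ ∑ _q ∈ hF.toFinset, N ^ (k - 1) := Finset.sum_le_sum hfiber
    _ = N ^ (k - 1) * F.ncard := by
      rw [Finset.sum_const, smul_eq_mul, ncard_eq_toFinset_card _ hF, mul_comm]

end Set

namespace Metric

variable {X : Type*}

theorem isSeparated_of_subsingleton_inter_ball [PseudoMetricSpace X] {P : Set X} {r : ℝ}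
    {ε : ℝ≥0} (hεr : (ε : ℝ) < r) (hP : ∀ m, (P ∩ ball m r).Subsingleton) :
    IsSeparated ε P := by
  intro p hp q hq hpq
  by_contra! h
  have hdist : dist p q < r := by
    rw [edist_dist, ← ENNReal.ofReal_coe_nnreal, ENNReal.ofReal_le_ofReal_iff ε.coe_nonneg] at h
    linarith
  exact hpq (hP p ⟨hp, mem_ball_self (dist_nonneg.trans_lt hdist)⟩ ⟨hq, mem_ball'.2 hdist⟩)

theorem _root_.TotallyBounded.packingNumber_ne_top [PseudoEMetricSpace X] {A : Set X}
    {ε : ℝ≥0} (hε : ε ≠ 0) (hA : TotallyBounded A) : packingNumber ε A ≠ ⊤ := by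
  obtain ⟨N, -, hNfin, hN⟩ := exists_finite_isCover_of_totallyBounded (ε := ε / 2) (by simpa) hA
  refine ne_top_of_le_ne_top hNfin.encard_lt_top.ne ?_
  calc packingNumber ε A = packingNumber (2 * (ε / 2)) A := by rw [mul_div_cancel₀ _ two_ne_zero]
    _ ≤ externalCoveringNumber (ε / 2) A := packingNumber_two_mul_le_externalCoveringNumber _ _
    _ ≤ N.encard := hN.externalCoveringNumber_le_encard

theorem packingNumber_smul_set [PseudoEMetricSpace X] {G : Type*} [Group G] [MulAction G X]
    [IsIsometricSMul G X] (ε : ℝ≥0) (g : G) (A : Set X) :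
    packingNumber ε (g • A) = packingNumber ε A := by
  have key : ∀ (g : G) (A : Set X), packingNumber ε (g • A) ≤ packingNumber ε A := by
    intro g A
    simp only [packingNumber, iSup_le_iff]
    intro C hCA hC
    have hsep : IsSeparated ε (g⁻¹ • C) := by
      simpa using hC.image_antilipschitz (isometry_smul X g⁻¹).antilipschitz one_pos
    rw [← encard_smul_set g⁻¹ C]
    exact hsep.encard_le_packingNumber (subset_smul_set_iff.1 hCA)
  refine le_antisymm (key g A) ?_
  simpa using key g⁻¹ (g • A)

theorem IsSeparated.finite_inter_and_ncard_le [PseudoEMetricSpace X] {P A : Set X} {ε : ℝ≥0}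
    (hP : IsSeparated ε P) (hA : packingNumber ε A ≠ ⊤) :
    (P ∩ A).Finite ∧ (P ∩ A).ncard ≤ (packingNumber ε A).toNat := by
  have h : (P ∩ A).encard ≤ packingNumber ε A :=
    (hP.subset inter_subset_left).encard_le_packingNumber inter_subset_right
  exact ⟨finite_of_encard_le_coe (h.trans_eq (ENat.natCast_toNat hA).symm),
    ENat.toNat_le_toNat h hA⟩

end Metric

/-- The set `S_{V,V}` of the informal statement. -/
def returnSet (T : Type*) {M : Type*} [SMul T M] (V : Set M) : Set T :=
  {g | (g • V ∩ V).Nonempty}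

section ReturnSet

variable {T M : Type*} [Group T] [MulAction T M]

theorem isCompact_returnSet [TopologicalSpace T] [TopologicalSpace M] [ProperSMul T M]
    {V : Set M} (hV : IsCompact V) : IsCompact (returnSet T V) :=
  ProperSMul.isCompact_setOfPred_inter_nonempty hV hV

theorem subset_smul_inv_returnSet_smul {V Q : Set M} {x x₀ : T} {q : M} (hxQ : x • Q ⊆ V)
    (hq : q ∈ Q) (hx₀q : x₀ • q ∈ V) : Q ⊆ x₀⁻¹ • ((returnSet T V)⁻¹ • V) := by
  -- `x * x₀⁻¹` sends the point `x₀ • q ∈ V` to `x • q ∈ V`.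
  have hret : x * x₀⁻¹ ∈ returnSet T V := by
    refine ⟨x • q, ⟨x₀ • q, hx₀q, ?_⟩, hxQ (smul_mem_smul_set hq)⟩
    change (x * x₀⁻¹) • x₀ • q = x • q
    rw [smul_smul, inv_mul_cancel_right]
  intro p hp
  rw [mem_smul_set_iff_inv_smul_mem, inv_inv]
  have h := smul_mem_smul (inv_mem_inv.2 hret) (hxQ (smul_mem_smul_set hp))
  rwa [smul_smul, mul_inv_rev, inv_inv, inv_mul_cancel_right] at h

end ReturnSet

theorem stmt_17_general {T M : Type*} [Group T] [TopologicalSpace T] [IsTopologicalGroup T]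
    [MetricSpace M]
    [MulAction T M]
    (hproper : IsProperMap (fun p : T × M => (p.1 • p.2, p.2)))
    (hiso : ∀ (x : T) (m m' : M), dist (x • m) (x • m') = dist m m')
    (r : ℝ) (hr : 0 < r)
    (U : Set M) (hU : IsCompact (closure U)) :
    ∃ Γ : ℕ, ∀ P : Set M, (∀ m : M, (P ∩ Metric.ball m r).Subsingleton) →
      ∀ k : ℕ, 1 ≤ k → ∀ D : Set T, IsCompact D →
        {Q : Set M | Q ⊆ P ∧ Q.ncard = k ∧ ∃ x ∈ D, x • Q ⊆ U}.Finite ∧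
        ({Q : Set M | Q ⊆ P ∧ Q.ncard = k ∧ ∃ x ∈ D, x • Q ⊆ U}.ncard : ℕ)
          ≤ Γ ^ (k - 1) * (P ∩ D⁻¹ • U).ncard := by
  have : ProperSMul T M := ⟨hproper⟩
  have : IsIsometricSMul T M := ⟨fun x => Isometry.of_dist_eq (hiso x)⟩
  set ε : ℝ≥0 := (r / 2).toNNReal
  have hε : ε ≠ 0 := by simpa [ε] using hr
  have hεr : (ε : ℝ) < r := by simp only [ε, Real.coe_toNNReal _ (half_pos hr).le]; linarith
  set K := (returnSet T (closure U))⁻¹ • closure U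
  have hK : packingNumber ε K ≠ ⊤ :=
    ((isCompact_returnSet hU).inv.smul_set hU).totallyBounded.packingNumber_ne_top hε
  refine ⟨(packingNumber ε K).toNat, fun P hP k hk D hD => ?_⟩
  have hPsep := isSeparated_of_subsingleton_inter_ball hεr hP
  have hF : (P ∩ D⁻¹ • U).Finite :=
    (hPsep.finite_inter_and_ncard_le
      ((hD.inv.smul_set hU).totallyBounded.packingNumber_ne_top hε)).1.subset
      (inter_subset_inter_right _ (smul_subset_smul_left subset_closure))
  refine ncard_le_pow_mul_ncard_of_forall_mem_subset hF hk ?_ ?_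
  · rintro Q ⟨hQP, hQk, x, hxD, hxQ⟩
    refine ⟨subset_inter hQP fun p hp => ?_, hQk⟩
    simpa using smul_mem_smul (inv_mem_inv.2 hxD) (hxQ (smul_mem_smul_set hp))
  · rintro _ ⟨-, d, -, u, hu, rfl⟩
    obtain ⟨hCfin, hCcard⟩ :=
      hPsep.finite_inter_and_ncard_le (A := d • K) (by rwa [packingNumber_smul_set])
    refine ⟨P ∩ d • K, hCfin, by rwa [packingNumber_smul_set] at hCcard, ?_⟩
    rintro Q ⟨hQP, -, x, -, hxQ⟩ hqQ
    have hdu : d⁻¹ • d • u ∈ closure U := by simpa using subset_closure hu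
    simpa using subset_inter hQP
      (subset_smul_inv_returnSet_smul (hxQ.trans subset_closure) hqQ hdu)

theorem stmt_17 {T M : Type*} [Group T] [TopologicalSpace T] [IsTopologicalGroup T]
    [LocallyCompactSpace T] [SecondCountableTopology T]
    [MetricSpace M] [ProperSpace M]
    [MulAction T M] [ContinuousSMul T M]
    (hproper : IsProperMap (fun p : T × M => (p.1 • p.2, p.2)))
    (hiso : ∀ (x : T) (m m' : M), dist (x • m) (x • m') = dist m m')
    (r : ℝ) (hr : 0 < r)
    (U : Set M) (hU : IsCompact (closure U)) :
    ∃ Γ : ℕ, ∀ P : Set M, (∀ m : M, (P ∩ Metric.ball m r).Subsingleton) →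
      ∀ k : ℕ, 1 ≤ k → ∀ D : Set T, IsCompact D →
        {Q : Set M | Q ⊆ P ∧ Q.ncard = k ∧ ∃ x ∈ D, x • Q ⊆ U}.Finite ∧
        ({Q : Set M | Q ⊆ P ∧ Q.ncard = k ∧ ∃ x ∈ D, x • Q ⊆ U}.ncard : ℕ)
          ≤ Γ ^ (k - 1) * (P ∩ D⁻¹ • U).ncard :=
  stmt_17_general hproper hiso r hr U hU
end
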